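/- Let (Ω, F, P) be a standard Borel probability space, let X₂ : Ω → ℝ^m be square-integrable, let X₁ : Ω → S be measurable, and let Y : Ω → Fin k be measurable with P(Y = y) > 0 for every y. Assume (i) X₁ and X₂ are conditionally independent given σ(Y) (the class conditional independence assumption), and (ii) the class-conditional means μ_y := E[X₂ · 1_{Y = y}] / P(Y = y) ∈ ℝ^m, y ∈ Fin k, are linearly independent. Let ψ* denote the representation minimizing the reconstruction loss, i.e., ψ*(X₁) = E[X₂ | σ(X₁)] (which minimizes E[‖X₂ − ψ(X₁)‖²] over measurable ψ). Then there exists a linear map w : ℝ^m → ℝ^k such that almost surely w(E[X₂ | σ(X₁)]) = (E[1_{Y = y} | σ(X₁)])_{y ∈ Fin k}; i.e., wᵀ ψ*(X₁) = E[Y | X₁] where Y is identified with its one-hot encoding in ℝ^k. -/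

import Mathlib

/-!
On an atom `{Y = y}` of `σ(Y)` every `σ(Y)`-conditional probability is constant, equal to the
elementary conditional probability given `Y = y`. Hence conditional independence of `X₁` and `X₂`
given `σ(Y)` is independence under each `μ[|Y = y]`, which gives
`E[1_{Y = y} X₂ | X₁] = P(Y = y | X₁) μ_y`, and summing over `y`,
`E[X₂ | X₁] = ∑_y P(Y = y | X₁) μ_y`. A linear map sending the linearly independent means `μ_y`
to the standard basis vectors `e_y` then maps `E[X₂ | X₁]` to `(P(Y = y | X₁))_y`.
-/

open MeasureTheory ProbabilityTheory

theorem LinearIndependent.exists_linearMap_apply_eq {ι K V W : Type*} [DivisionRing K]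
    [AddCommGroup V] [Module K V] [AddCommGroup W] [Module K W] {v : ι → V}
    (hv : LinearIndependent K v) (f : ι → W) : ∃ w : V →ₗ[K] W, ∀ i, w (v i) = f i := by
  obtain ⟨w, hw⟩ := LinearMap.exists_extend (Finsupp.linearCombination K f ∘ₗ hv.repr)
  refine ⟨w, fun i => ?_⟩
  have hi : v i ∈ Submodule.span K (Set.range v) := Submodule.subset_span ⟨i, rfl⟩
  calc w (v i) = (w ∘ₗ (Submodule.span K (Set.range v)).subtype) ⟨v i, hi⟩ := rfl
    _ = f i := by rw [hw]; simp [hv.repr_eq_single i ⟨v i, hi⟩ rfl]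

namespace ProbabilityTheory

variable {Ω β : Type*} {mΩ : MeasurableSpace Ω} {μ : Measure Ω}

section Cond

variable {E : Type*} [NormedAddCommGroup E] [NormedSpace ℝ E]

theorem integral_cond_eq_inv_smul_setIntegral (s : Set Ω) (f : Ω → E) :
    ∫ x, f x ∂μ[|s] = (μ.real s)⁻¹ • ∫ x in s, f x ∂μ := by
  rw [cond, integral_smul_measure, ENNReal.toReal_inv]
  rfl

theorem setIntegral_eq_measureReal_smul_integral_cond [IsFiniteMeasure μ] (s : Set Ω)
    (f : Ω → E) : ∫ x in s, f x ∂μ = μ.real s • ∫ x, f x ∂μ[|s] := by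
  by_cases hs : μ s = 0
  · simp [Measure.restrict_eq_zero.2 hs, measureReal_def, hs]
  rw [integral_cond_eq_inv_smul_setIntegral,
    smul_inv_smul₀ ((measureReal_ne_zero_iff (measure_ne_top μ s)).2 hs)]

theorem condExp_comap_apply_eq_integral_cond [CompleteSpace E] [mβ : MeasurableSpace β]
    [MeasurableSingletonClass β] [IsFiniteMeasure μ] {Y : Ω → β} (hY : Measurable Y)
    {f : Ω → E} (hf : Integrable f μ) {y : β} (hy : μ (Y ⁻¹' {y}) ≠ 0) {ω : Ω}
    (hω : Y ω = y) : μ[f | mβ.comap Y] ω = ∫ x, f x ∂μ[|Y ⁻¹' {y}] := by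
  have hconst : ∀ ω' ∈ Y ⁻¹' {y}, μ[f | mβ.comap Y] ω' = μ[f | mβ.comap Y] ω :=
    fun ω' hω' => stronglyMeasurable_condExp.factorsThrough (hω'.trans hω.symm)
  have hint := setIntegral_condExp hY.comap_le hf ⟨{y}, measurableSet_singleton y, rfl⟩
  rw [setIntegral_congr_fun (hY (measurableSet_singleton y)) hconst, setIntegral_const,
    setIntegral_eq_measureReal_smul_integral_cond] at hint
  exact smul_right_injective E ((measureReal_ne_zero_iff (measure_ne_top μ _)).2 hy) hint

end Cond

section CondIndepFun

variable [StandardBorelSpace Ω] [IsFiniteMeasure μ] {γ δ : Type*} [MeasurableSpace γ]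
  [MeasurableSpace δ] {f : Ω → γ} {g : Ω → δ}

theorem CondIndepFun.congr {m : MeasurableSpace Ω} {hm : m ≤ mΩ} {f' : Ω → γ} {g' : Ω → δ}
    (h : CondIndepFun m hm f g μ) (hf : f =ᵐ[μ] f') (hg : g =ᵐ[μ] g') :
    CondIndepFun m hm f' g' μ := by
  refine Kernel.IndepFun.congr' h (Measure.ae_ae_of_ae_comp ?_) (Measure.ae_ae_of_ae_comp ?_) <;>
    rwa [condExpKernel_comp_trim (mΩ := mΩ) hm]

variable [mβ : MeasurableSpace β] [MeasurableSingletonClass β] {Y : Ω → β}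

theorem CondIndepFun.indepFun_cond_preimage_singleton (hY : Measurable Y)
    (h : CondIndepFun (mβ.comap Y) hY.comap_le f g μ) (hf : Measurable f) (hg : Measurable g)
    (y : β) : f ⟂ᵢ[μ[|Y ⁻¹' {y}]] g := by
  set s := Y ⁻¹' {y}
  by_cases hs : μ s = 0
  · simp [indepFun_iff_measure_inter_preimage_eq_mul, cond_eq_zero_of_meas_eq_zero hs]
  rw [indepFun_iff_measure_inter_preimage_eq_mul]
  intro A B hA hB
  have hfactor := (condIndepFun_iff_condExp_inter_preimage_eq_mul hf hg).1 h A B hA hB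
  have : NeZero (μ.restrict s) := ⟨by simpa [s]⟩
  -- the a.e. factorisation holds at some point of the atom, where all three terms are constants
  obtain ⟨ω, hω, hωs⟩ := (ae_restrict_of_ae hfactor).and
    (ae_restrict_mem (hY (measurableSet_singleton y))) |>.exists
  have hatom (t : Set Ω) (ht : MeasurableSet t) : (μ⟦t | mβ.comap Y⟧) ω = μ[|s].real t := by
    rw [condExp_comap_apply_eq_integral_cond hY ((integrable_const 1).indicator ht) hs hωs]
    exact integral_indicator_one ht
  dsimp only at hω
  rw [hatom _ ((hf hA).inter (hg hB)), hatom _ (hf hA), hatom _ (hg hB)] at hω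
  rwa [measureReal_def, measureReal_def, measureReal_def, ← ENNReal.toReal_mul,
    ENNReal.toReal_eq_toReal_iff' (measure_ne_top _ _) (by finiteness)] at hω

theorem CondIndepFun.indepFun_cond_preimage_singleton₀ (hY : Measurable Y)
    (h : CondIndepFun (mβ.comap Y) hY.comap_le f g μ) (hf : AEMeasurable f μ)
    (hg : AEMeasurable g μ) (y : β) : f ⟂ᵢ[μ[|Y ⁻¹' {y}]] g :=
  ((h.congr hf.ae_eq_mk hg.ae_eq_mk).indepFun_cond_preimage_singleton hY hf.measurable_mk
    hg.measurable_mk y).congr (cond_absolutelyContinuous.ae_eq hf.ae_eq_mk.symm)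
    (cond_absolutelyContinuous.ae_eq hg.ae_eq_mk.symm)

end CondIndepFun

section Posterior

variable {S E : Type*} [mS : MeasurableSpace S] [NormedAddCommGroup E] [NormedSpace ℝ E]
  [MeasurableSpace E] [BorelSpace E] {X : Ω → S} {Z : Ω → E}

theorem IndepFun.setIntegral_preimage (h : X ⟂ᵢ[μ] Z) (hX : Measurable X)
    (hZ : AEStronglyMeasurable Z μ) {t : Set S} (ht : MeasurableSet t) :
    ∫ ω in X ⁻¹' t, Z ω ∂μ = μ.real (X ⁻¹' t) • ∫ ω, Z ω ∂μ := by
  have hind : Measurable (t.indicator fun _ => (1 : ℝ)) := measurable_const.indicator ht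
  have hprod := (h.comp hind measurable_id).integral_fun_smul_eq_smul_integral
    (hind.comp hX).aestronglyMeasurable hZ
  calc ∫ ω in X ⁻¹' t, Z ω ∂μ = ∫ ω, t.indicator (fun _ => (1 : ℝ)) (X ω) • Z ω ∂μ := by
        rw [← integral_indicator (hX ht)]
        congr 1 with ω
        by_cases hω : X ω ∈ t <;> simp [hω]
    _ = (∫ ω, t.indicator (fun _ => (1 : ℝ)) (X ω) ∂μ) • ∫ ω, Z ω ∂μ := hprod
    _ = μ.real (X ⁻¹' t) • ∫ ω, Z ω ∂μ := by rw [← integral_indicator_one (hX ht)]; rfl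

variable [CompleteSpace E]

theorem condExp_indicator_ae_eq_condExp_smul_integral_cond [IsFiniteMeasure μ]
    (hX : Measurable X) (hZ : Integrable Z μ) {s : Set Ω} (hs : MeasurableSet s)
    (h : X ⟂ᵢ[μ[|s]] Z) :
    μ[s.indicator Z | mS.comap X] =ᵐ[μ] fun ω => (μ⟦s | mS.comap X⟧) ω • ∫ x, Z x ∂μ[|s] := by
  set c := ∫ x, Z x ∂μ[|s]
  refine (ae_eq_condExp_of_forall_setIntegral_eq hX.comap_le (hZ.indicator hs)
    (fun _ _ _ => (integrable_condExp.smul_const c).integrableOn) ?_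
    (stronglyMeasurable_condExp.smul_const c).aestronglyMeasurable).symm
  rintro _ ⟨t, ht, rfl⟩ -
  calc ∫ ω in X ⁻¹' t, (μ⟦s | mS.comap X⟧) ω • c ∂μ
        = (∫ ω in X ⁻¹' t, (μ⟦s | mS.comap X⟧) ω ∂μ) • c := integral_smul_const _ _
    _ = μ.real (X ⁻¹' t ∩ s) • c := by
        rw [setIntegral_condExp hX.comap_le ((integrable_const 1).indicator hs) ⟨t, ht, rfl⟩,
          setIntegral_indicator hs]
        simp
    _ = μ.real s • μ[|s].real (X ⁻¹' t) • c := by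
        rw [smul_smul, measureReal_def, measureReal_def, measureReal_def, ← ENNReal.toReal_mul,
          mul_comm, cond_mul_eq_inter hs, Set.inter_comm]
    _ = μ.real s • ∫ ω in X ⁻¹' t, Z ω ∂(μ[|s]) := by
        rw [h.setIntegral_preimage hX (hZ.1.mono_ac cond_absolutelyContinuous) ht]
    _ = ∫ ω in s, (X ⁻¹' t).indicator Z ω ∂μ := by
        rw [setIntegral_eq_measureReal_smul_integral_cond s, integral_indicator (hX ht)]
    _ = ∫ ω in X ⁻¹' t, s.indicator Z ω ∂μ := by
        rw [setIntegral_indicator (hX ht), setIntegral_indicator hs, Set.inter_comm]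

theorem condExp_ae_eq_sum_condExp_preimage_singleton_smul [StandardBorelSpace Ω]
    [IsFiniteMeasure μ] [mβ : MeasurableSpace β] [MeasurableSingletonClass β] [Fintype β]
    {Y : Ω → β} (hX : Measurable X) (hY : Measurable Y) (hZ : Integrable Z μ)
    (h : CondIndepFun (mβ.comap Y) hY.comap_le X Z μ) :
    μ[Z | mS.comap X] =ᵐ[μ]
      fun ω => ∑ y, (μ⟦Y ⁻¹' {y} | mS.comap X⟧) ω • ∫ x, Z x ∂μ[|Y ⁻¹' {y}] := by
  classical
  have hsplit : Z = ∑ y, (Y ⁻¹' {y}).indicator Z := by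
    ext1 ω
    rw [Finset.sum_apply, Finset.sum_eq_single (Y ω) (fun y _ hy => by simp [Ne.symm hy])
      (by simp)]
    simp
  have hclass (y : β) := condExp_indicator_ae_eq_condExp_smul_integral_cond hX hZ
    (hY (measurableSet_singleton y))
    (h.indepFun_cond_preimage_singleton₀ hY hX.aemeasurable hZ.aemeasurable y)
  refine (condExp_congr_ae (Filter.EventuallyEq.of_eq hsplit)).trans
    ((condExp_finsetSum (fun y _ => hZ.indicator (hY (measurableSet_singleton y))) _).trans ?_)
  filter_upwards [ae_all_iff.2 hclass] with ω hω
  simp [Finset.sum_apply, hω]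

end Posterior

end ProbabilityTheory

theorem exists_linear_map_condexp_eq_posterior_general
    {Ω : Type*} {F : MeasurableSpace Ω} [StandardBorelSpace Ω]
    {μ : Measure Ω} [IsProbabilityMeasure μ]
    {m k : ℕ} {S : Type*} [MeasurableSpace S]
    (X₂ : Ω → EuclideanSpace ℝ (Fin m)) (hX₂mem : MemLp X₂ 2 μ)
    (X₁ : Ω → S) (hX₁ : Measurable X₁)
    (Y : Ω → Fin k) (hY : Measurable Y)
    (hindep : CondIndepFun (MeasurableSpace.comap Y inferInstance)
      (hY.comap_le) X₁ X₂ μ)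
    (hli : LinearIndependent ℝ (fun y : Fin k =>
      (((μ (Y ⁻¹' {y})).toReal)⁻¹ • ∫ ω', Set.indicator (Y ⁻¹' {y}) X₂ ω' ∂μ :
        EuclideanSpace ℝ (Fin m)))) :
    ∃ w : EuclideanSpace ℝ (Fin m) →ₗ[ℝ] EuclideanSpace ℝ (Fin k),
      ∀ᵐ ω ∂μ,
        w ((μ[X₂ | MeasurableSpace.comap X₁ inferInstance]) ω)
          = WithLp.toLp 2 (fun y : Fin k =>
              condExp (MeasurableSpace.comap X₁ inferInstance) μ
                (Set.indicator (Y ⁻¹' {y}) fun _ => (1 : ℝ)) ω) := by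
  have hmeans : (fun y : Fin k =>
      (((μ (Y ⁻¹' {y})).toReal)⁻¹ • ∫ ω', Set.indicator (Y ⁻¹' {y}) X₂ ω' ∂μ :
        EuclideanSpace ℝ (Fin m))) = fun y => ∫ ω, X₂ ω ∂μ[|Y ⁻¹' {y}] := by
    ext1 y
    rw [integral_cond_eq_inv_smul_setIntegral, integral_indicator (hY (measurableSet_singleton y)),
      measureReal_def]
  rw [hmeans] at hli
  obtain ⟨w, hw⟩ := hli.exists_linearMap_apply_eq fun y => EuclideanSpace.single y (1 : ℝ)
  refine ⟨w, ?_⟩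
  filter_upwards [condExp_ae_eq_sum_condExp_preimage_singleton_smul hX₁ hY
    (hX₂mem.integrable one_le_two) hindep] with ω hω
  rw [hω, map_sum]
  ext y
  simp [hw, Pi.single_apply]

/-- Theorem 1 of the paper (after Lee et al. 2021): for two views `X₁, X₂` of a data
point and a label `Y` with `k` classes, under the class conditional independence
assumption `X₁ ⟂ X₂ | Y` and linear independence of the class-conditional means
`μ_y = E[X₂ · 1_{Y = y}] / P(Y = y)`, there is a linear map `w` with
`wᵀ ψ*(X₁) = E[Y | X₁]` almost surely, where `ψ*(X₁) = E[X₂ | σ(X₁)]` is the minimizer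
of the reconstruction loss and `Y` is identified with its one-hot encoding in `ℝ^k`. -/
theorem exists_linear_map_condexp_eq_posterior
    {Ω : Type*} {F : MeasurableSpace Ω} [StandardBorelSpace Ω]
    {μ : Measure Ω} [IsProbabilityMeasure μ]
    {m k : ℕ} {S : Type*} [MeasurableSpace S]
    (X₂ : Ω → EuclideanSpace ℝ (Fin m)) (hX₂mem : MemLp X₂ 2 μ)
    (X₁ : Ω → S) (hX₁ : Measurable X₁)
    (Y : Ω → Fin k) (hY : Measurable Y)
    (hpos : ∀ y : Fin k, 0 < μ (Y ⁻¹' {y}))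
    (hindep : CondIndepFun (MeasurableSpace.comap Y inferInstance)
      (hY.comap_le) X₁ X₂ μ)
    (hli : LinearIndependent ℝ (fun y : Fin k =>
      (((μ (Y ⁻¹' {y})).toReal)⁻¹ • ∫ ω', Set.indicator (Y ⁻¹' {y}) X₂ ω' ∂μ :
        EuclideanSpace ℝ (Fin m)))) :
    ∃ w : EuclideanSpace ℝ (Fin m) →ₗ[ℝ] EuclideanSpace ℝ (Fin k),
      ∀ᵐ ω ∂μ,
        w ((μ[X₂ | MeasurableSpace.comap X₁ inferInstance]) ω)
          = WithLp.toLp 2 (fun y : Fin k =>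
              condExp (MeasurableSpace.comap X₁ inferInstance) μ
                (Set.indicator (Y ⁻¹' {y}) fun _ => (1 : ℝ)) ω) :=
  exists_linear_map_condexp_eq_posterior_general (F := F) X₂ hX₂mem X₁ hX₁ Y hY hindep hli
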